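/- arXiv:1901.03000 — 2 statements merged into one kernel-verified Lean document; each statement's English description precedes it below -/
import Mathlib

section
/- Assume k ≤ LR and that R does not divide k. Then w_i(π*(s*)) ≥ w_i(π^(k)) for every 1 ≤ i ≤ k, and consequently MC(π^(k)) ≤ MC(π*(s*)); that is, when R ∤ k, adding a separate node reduces (does not increase) the capacity of the cluster DSS. -/
/-- Relative location `h_π(i) = #{1 ≤ j ≤ i : π j = π i}`. -/
def relLoc (π : ℕ → ℕ) (i : ℕ) : ℕ :=
  ((Finset.Icc 1 i).filter (fun j => π j = π i)).card

/-- Intra-cluster coefficient `a_i(π) = d_I + 1 − h_π(i)` (truncated subtraction). -/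
def aCoef (dI : ℕ) (π : ℕ → ℕ) (i : ℕ) : ℕ :=
  dI + 1 - relLoc π i

/-- Cross-cluster coefficient `b_i(π) = max(0, d_C − (i − h_π(i)))` (truncated subtraction). -/
def bCoef (dC : ℕ) (π : ℕ → ℕ) (i : ℕ) : ℕ :=
  dC - (i - relLoc π i)

/-- Part incoming weight `w_i(π)`: for a separate position (`π i = 0`) it is
`(d_I + d_C + 1 − i)·β_C`, otherwise `a_i(π)·β_I + b_i(π)·β_C`. -/
noncomputable def weight (dI dC : ℕ) (βI βC : ℝ) (π : ℕ → ℕ) (i : ℕ) : ℝ :=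
  if π i = 0 then ((dI + dC + 1 - i : ℕ) : ℝ) * βC
  else (aCoef dI π i : ℝ) * βI + (bCoef dC π i : ℝ) * βC

/-- Min-cut `MC(π) = Σ_{i=1}^k min(α, w_i(π))`. -/
noncomputable def MC (k dI dC : ℕ) (βI βC α : ℝ) (π : ℕ → ℕ) : ℝ :=
  ∑ i ∈ Finset.Icc 1 k, min α (weight dI dC βI βC π i)

/-- A cluster order: a `k`-tuple with entries in `{0, 1, …, L}`. -/
def IsClusterOrder (L k : ℕ) (π : ℕ → ℕ) : Prop :=
  ∀ i, 1 ≤ i → i ≤ k → π i ≤ L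

/-- A selected node distribution `(s_0, s_1, …, s_L)`:
`R ≥ s_1 ≥ s_2 ≥ … ≥ s_L` and `s_0 + s_1 + … + s_L = k`. -/
def IsDist (L R k : ℕ) (s : ℕ → ℕ) : Prop :=
  (∀ i, 1 ≤ i → i + 1 ≤ L → s (i + 1) ≤ s i) ∧
  (∀ i, 1 ≤ i → i ≤ L → s i ≤ R) ∧
  ∑ i ∈ Finset.range (L + 1), s i = k

/-- `π ∈ Π(s)`: `π` is a cluster order with `#{1 ≤ j ≤ k : π j = c} = s c` for all `0 ≤ c ≤ L`. -/
def MemPi (L k : ℕ) (s : ℕ → ℕ) (π : ℕ → ℕ) : Prop :=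
  IsClusterOrder L k π ∧
  ∀ c, c ≤ L → ((Finset.Icc 1 k).filter (fun j => π j = c)).card = s c

/-- Vertical order of distribution `s` (possibly with separate entries, whose positions are
not constrained here):  over the cluster positions (`π i ≠ 0`) in increasing order, relative
locations are nondecreasing, with ties broken by increasing cluster index. -/
def IsVerticalOrder (L k : ℕ) (s : ℕ → ℕ) (π : ℕ → ℕ) : Prop :=
  MemPi L k s π ∧
  ∀ i j, 1 ≤ i → i < j → j ≤ k → π i ≠ 0 → π j ≠ 0 →
    relLoc π i ≤ relLoc π j ∧ (relLoc π i = relLoc π j → π i < π j)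

/-- The distribution `s*` (no separate node): `s*_0 = 0`, `s*_i = R` for `1 ≤ i ≤ ⌊k/R⌋`,
`s*_{⌊k/R⌋+1} = k − ⌊k/R⌋·R`, and `0` beyond. -/
def sStar0 (R k : ℕ) : ℕ → ℕ := fun i =>
  if i = 0 then 0
  else if i ≤ k / R then R
  else if i = k / R + 1 then k - k / R * R
  else 0

/-- The distribution with one separate node: `s_0 = 1`, `s_i = R` for `1 ≤ i ≤ ⌊(k−1)/R⌋`,
`s_{⌊(k−1)/R⌋+1} = (k−1) − ⌊(k−1)/R⌋·R`, and `0` beyond. -/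
def sStar1 (R k : ℕ) : ℕ → ℕ := fun i =>
  if i = 0 then 1
  else if i ≤ (k - 1) / R then R
  else if i = (k - 1) / R + 1 then (k - 1) - (k - 1) / R * R
  else 0

/-- `π^(j)`: the cluster order with exactly one separate entry, located at position `j`,
whose cluster entries form the vertical order of the distribution `sStar1 R k`. -/
def IsPiJ (L R k j : ℕ) (π : ℕ → ℕ) : Prop :=
  π j = 0 ∧ IsVerticalOrder L k (sStar1 R k) π

/-!
In a vertical order of a distribution `s`, the cluster positions whose relative location is at
most `h` number `∑_c min (s c) h`, and the first `i` positions all have relative location at most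
that of position `i`. Since `R ∤ k`, the distribution of `π^(k)` is dominated cluster by cluster
by `s*`, so counting these positions shows that each of the first `k − 1` positions has no larger
relative location in `π*(s*)` than in `π^(k)`; a smaller relative location only trades `β_C`
terms for at least as many of the larger `β_I` terms. At position `k` the separate node of `π^(k)`
receives `(d − k + 1) β_C`, which no cluster node falls below.
-/

open Finset

def positionsOf (π : ℕ → ℕ) (n c : ℕ) : Finset ℕ :=
  (Icc 1 n).filter (fun j => π j = c)

section RelLoc

variable {π : ℕ → ℕ}

lemma mem_positionsOf {n c j : ℕ} : j ∈ positionsOf π n c ↔ (1 ≤ j ∧ j ≤ n) ∧ π j = c := by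
  simp [positionsOf]

lemma relLoc_eq_card (π : ℕ → ℕ) (i : ℕ) : relLoc π i = (positionsOf π i (π i)).card := rfl

lemma positionsOf_mono {m n : ℕ} (hmn : m ≤ n) (c : ℕ) :
    positionsOf π m c ⊆ positionsOf π n c :=
  filter_subset_filter _ (Icc_subset_Icc_right hmn)

lemma one_le_relLoc {i : ℕ} (hi : 1 ≤ i) : 1 ≤ relLoc π i :=
  card_pos.mpr ⟨i, mem_positionsOf.mpr ⟨⟨hi, le_rfl⟩, rfl⟩⟩

lemma relLoc_le_self (π : ℕ → ℕ) (i : ℕ) : relLoc π i ≤ i :=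
  (card_filter_le _ _).trans (by simp)

lemma relLoc_le_card_positionsOf {i n : ℕ} (hin : i ≤ n) :
    relLoc π i ≤ (positionsOf π n (π i)).card :=
  card_le_card (positionsOf_mono hin _)

lemma strictMonoOn_relLoc (c : ℕ) : StrictMonoOn (relLoc π) {j | 1 ≤ j ∧ π j = c} := by
  rintro i ⟨hi, rfl⟩ j ⟨-, hj⟩ hij
  rw [relLoc_eq_card, relLoc_eq_card, hj]
  refine card_lt_card ⟨positionsOf_mono hij.le _, fun hsub => ?_⟩
  have := mem_positionsOf.mp (hsub (mem_positionsOf.mpr ⟨⟨by omega, le_rfl⟩, hj⟩))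
  omega

lemma injOn_relLoc_positionsOf (n c : ℕ) : Set.InjOn (relLoc π) (positionsOf π n c) :=
  (strictMonoOn_relLoc c).injOn.mono fun _ hj =>
    And.intro (mem_positionsOf.mp hj).1.1 (mem_positionsOf.mp hj).2

lemma image_relLoc_positionsOf (n c : ℕ) :
    (positionsOf π n c).image (relLoc π) = Icc 1 (positionsOf π n c).card := by
  refine eq_of_subset_of_card_le (fun x hx => ?_) ?_
  · obtain ⟨j, hj, rfl⟩ := mem_image.mp hx
    obtain ⟨⟨hj1, hjn⟩, rfl⟩ := mem_positionsOf.mp hj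
    exact mem_Icc.mpr ⟨one_le_relLoc hj1, relLoc_le_card_positionsOf hjn⟩
  · rw [card_image_of_injOn (injOn_relLoc_positionsOf n c)]
    simp

lemma card_filter_relLoc_le_positionsOf (n c h : ℕ) :
    ((positionsOf π n c).filter (relLoc π · ≤ h)).card = min (positionsOf π n c).card h := by
  have hinj := (injOn_relLoc_positionsOf (π := π) n c).mono (filter_subset (relLoc π · ≤ h) _)
  rw [← card_image_of_injOn hinj, ← filter_image (p := (· ≤ h)), image_relLoc_positionsOf]
  have : (Icc 1 (positionsOf π n c).card).filter (· ≤ h)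
      = Icc 1 (min (positionsOf π n c).card h) := by
    ext x; simp only [mem_filter, mem_Icc]; omega
  rw [this]
  simp

end RelLoc

namespace MemPi

variable {L k : ℕ} {s π : ℕ → ℕ}

lemma card_positionsOf (hπ : MemPi L k s π) {c : ℕ} (hc : c ≤ L) :
    (positionsOf π k c).card = s c :=
  hπ.2 c hc

lemma card_filter_relLoc_le (hπ : MemPi L k s π) (h : ℕ) :
    ((Icc 1 k).filter (fun j => π j ≠ 0 ∧ relLoc π j ≤ h)).card
      = ∑ c ∈ Icc 1 L, min (s c) h := by
  rw [card_eq_sum_card_fiberwise (f := π) (t := Icc 1 L)]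
  · refine sum_congr rfl fun c hc => ?_
    have hc := mem_Icc.mp hc
    rw [← hπ.card_positionsOf hc.2, ← card_filter_relLoc_le_positionsOf k c h]
    congr 1
    ext j
    simp only [positionsOf, mem_filter]
    constructor
    · rintro ⟨⟨hj, -, hjh⟩, rfl⟩
      exact ⟨⟨hj, rfl⟩, hjh⟩
    · rintro ⟨⟨hj, rfl⟩, hjh⟩
      exact ⟨⟨hj, by omega, hjh⟩, rfl⟩
  · intro j hj
    simp only [coe_filter, Set.mem_ofPred_eq, mem_Icc] at hj
    exact mem_Icc.mpr ⟨Nat.one_le_iff_ne_zero.mpr hj.2.1, hπ.1 j hj.1.1 hj.1.2⟩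

lemma relLoc_le (hπ : MemPi L k s π) {m : ℕ} (hs : ∀ c, c ≠ 0 → s c ≤ m) {i : ℕ}
    (hi : 1 ≤ i) (hik : i ≤ k) (hπi : π i ≠ 0) : relLoc π i ≤ m :=
  calc relLoc π i ≤ (positionsOf π k (π i)).card := relLoc_le_card_positionsOf hik
    _ = s (π i) := hπ.card_positionsOf (hπ.1 i hi hik)
    _ ≤ m := hs _ hπi

lemma ne_zero_of_eq_zero (hπ : MemPi L k s π) (hs : s 0 = 0) {i : ℕ} (hi : 1 ≤ i)
    (hik : i ≤ k) : π i ≠ 0 := fun hπi => by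
  have := hπ.card_positionsOf (Nat.zero_le L)
  rw [hs, card_eq_zero] at this
  exact notMem_empty i (this ▸ mem_positionsOf.mpr ⟨⟨hi, hik⟩, hπi⟩)

lemma ne_zero_of_ne (hπ : MemPi L k s π) (hs : s 0 ≤ 1) {i j : ℕ} (hj : 1 ≤ j) (hjk : j ≤ k)
    (hπj : π j = 0) (hi : 1 ≤ i) (hik : i ≤ k) (hij : i ≠ j) : π i ≠ 0 := fun hπi => by
  have := hπ.card_positionsOf (Nat.zero_le L)
  rw [← this, card_le_one] at hs
  exact hij (hs i (mem_positionsOf.mpr ⟨⟨hi, hik⟩, hπi⟩) j (mem_positionsOf.mpr ⟨⟨hj, hjk⟩, hπj⟩))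

end MemPi

namespace IsVerticalOrder

variable {L k : ℕ} {s π : ℕ → ℕ}

lemma le_sum_min_relLoc (hπ : IsVerticalOrder L k s π) {i : ℕ} (hik : i ≤ k)
    (hne : ∀ j, 1 ≤ j → j ≤ i → π j ≠ 0) :
    i ≤ ∑ c ∈ Icc 1 L, min (s c) (relLoc π i) := by
  rw [← hπ.1.card_filter_relLoc_le]
  calc i = (Icc 1 i).card := by simp
    _ ≤ _ := card_le_card fun j hj => by
      obtain ⟨hj1, hji⟩ := mem_Icc.mp hj
      refine mem_filter.mpr ⟨mem_Icc.mpr ⟨hj1, hji.trans hik⟩, hne j hj1 hji, ?_⟩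
      rcases hji.lt_or_eq with hji | rfl
      · exact (hπ.2 j i hj1 hji hik (hne j hj1 hji.le) (hne i (by omega) le_rfl)).1
      · exact le_rfl

lemma sum_min_lt (hπ : IsVerticalOrder L k s π) {i h : ℕ} (hi : 1 ≤ i)
    (hπi : π i ≠ 0) (hh : h < relLoc π i) :
    ∑ c ∈ Icc 1 L, min (s c) h < i := by
  rw [← hπ.1.card_filter_relLoc_le]
  calc _ ≤ (Icc 1 (i - 1)).card := card_le_card fun j hj => by
        obtain ⟨⟨hj1, hjk⟩, hπj, hjh⟩ := by simpa only [mem_filter, mem_Icc] using hj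
        refine mem_Icc.mpr ⟨hj1, ?_⟩
        by_contra! hij
        rcases (show i ≤ j by omega).lt_or_eq with hij | rfl
        · have := (hπ.2 i j hi hij hjk hπi hπj).1
          omega
        · omega
    _ < i := by rw [Nat.card_Icc]; omega

lemma relLoc_le_relLoc {s' π' : ℕ → ℕ} (hπ : IsVerticalOrder L k s π)
    (hπ' : IsVerticalOrder L k s' π') (hss' : ∀ c, c ≠ 0 → s c ≤ s' c) {i : ℕ} (hi : 1 ≤ i)
    (hik : i ≤ k) (hne : ∀ j, 1 ≤ j → j ≤ i → π j ≠ 0) (hπ'i : π' i ≠ 0) :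
    relLoc π' i ≤ relLoc π i := by
  by_contra! hlt
  have hsum : ∑ c ∈ Icc 1 L, min (s c) (relLoc π i) ≤ ∑ c ∈ Icc 1 L, min (s' c) (relLoc π i) :=
    sum_le_sum fun c hc => min_le_min_right _ (hss' c (by rw [mem_Icc] at hc; omega))
  have := hπ.le_sum_min_relLoc hik hne
  have := hπ'.sum_min_lt hi hπ'i hlt
  omega

end IsVerticalOrder

lemma sStar0_zero (R k : ℕ) : sStar0 R k 0 = 0 := rfl

lemma sStar1_zero (R k : ℕ) : sStar1 R k 0 = 1 := rfl

lemma sStar0_le {R : ℕ} (hR : 0 < R) (k c : ℕ) : sStar0 R k c ≤ R := by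
  have := Nat.div_add_mod' k R
  have := Nat.mod_lt k hR
  simp only [sStar0]
  split_ifs <;> omega

lemma sStar1_le_sStar0 {R k : ℕ} (hRk : ¬ R ∣ k) {c : ℕ} (hc : c ≠ 0) :
    sStar1 R k c ≤ sStar0 R k c := by
  obtain ⟨k, rfl⟩ : ∃ m, k = m + 1 := Nat.exists_eq_add_one.mpr
    (Nat.pos_of_ne_zero fun hk => hRk (hk ▸ dvd_zero R))
  have hdiv := Nat.succ_div_of_not_dvd hRk
  have := Nat.div_add_mod' k R
  simp only [sStar0, sStar1, hc, hdiv, Nat.add_sub_cancel, if_false]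
  split_ifs <;> omega

lemma natCast_mul_add_natCast_mul_le {βI βC : ℝ} (hβ : βC ≤ βI) (hβC : 0 ≤ βC)
    {a b a' b' : ℕ} (hb : b' ≤ b) (hab : a + b ≤ a' + b') :
    a * βI + b * βC ≤ a' * βI + b' * βC := by
  have hb : (b' : ℝ) ≤ b := by exact_mod_cast hb
  have hab : (a : ℝ) + b ≤ a' + b' := by exact_mod_cast hab
  nlinarith [mul_nonneg (sub_nonneg.mpr hab) (hβC.trans hβ),
    mul_nonneg (sub_nonneg.mpr hb) (sub_nonneg.mpr hβ)]

section Weight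

variable {dI dC : ℕ} {βI βC : ℝ} {π π' : ℕ → ℕ} {i : ℕ}

lemma weight_le_weight_of_relLoc_le (hβ : βC ≤ βI) (hβC : 0 ≤ βC) (hπ : π i ≠ 0)
    (hπ' : π' i ≠ 0) (hrel : relLoc π' i ≤ relLoc π i) (hdI : relLoc π i ≤ dI + 1) :
    weight dI dC βI βC π i ≤ weight dI dC βI βC π' i := by
  rw [weight, weight, if_neg hπ, if_neg hπ']
  exact natCast_mul_add_natCast_mul_le hβ hβC (by unfold bCoef; omega)
    (by unfold aCoef bCoef; omega)

lemma weight_le_weight_of_eq_zero (hβ : βC ≤ βI) (hβC : 0 ≤ βC) (hπ : π i = 0)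
    (hπ' : π' i ≠ 0) (hdI : relLoc π' i ≤ dI + 1) :
    weight dI dC βI βC π i ≤ weight dI dC βI βC π' i := by
  have := relLoc_le_self π' i
  rw [weight, weight, if_pos hπ, if_neg hπ']
  simpa using natCast_mul_add_natCast_mul_le (a := 0) hβ hβC (by unfold bCoef; omega)
    (by unfold aCoef bCoef; omega)

end Weight

lemma MC_mono {k dI dC : ℕ} {βI βC : ℝ} (α : ℝ) {π π' : ℕ → ℕ}
    (h : ∀ i, 1 ≤ i → i ≤ k → weight dI dC βI βC π i ≤ weight dI dC βI βC π' i) :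
    MC k dI dC βI βC α π ≤ MC k dI dC βI βC α π' :=
  sum_le_sum fun i hi => min_le_min_left α (h i (mem_Icc.mp hi).1 (mem_Icc.mp hi).2)

theorem stmt18_general (L R k dI dC : ℕ) (βI βC α : ℝ)
    (hR : 2 ≤ R) (hdI : dI = R - 1) (hβ : βC ≤ βI) (hβC : 0 < βC) (hndvd : ¬ R ∣ k)
    (πs : ℕ → ℕ) (hπs : IsVerticalOrder L k (sStar0 R k) πs)
    (πk : ℕ → ℕ) (hπk : IsPiJ L R k k πk) :
    (∀ i, 1 ≤ i → i ≤ k →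
      weight dI dC βI βC πk i ≤ weight dI dC βI βC πs i) ∧
    MC k dI dC βI βC α πk ≤ MC k dI dC βI βC α πs := by
  obtain ⟨hπkk, hπk⟩ := hπk
  have hs0R : ∀ c, c ≠ 0 → sStar0 R k c ≤ dI + 1 := fun c _ =>
    (sStar0_le (by omega) k c).trans (by omega)
  have hs1R : ∀ c, c ≠ 0 → sStar1 R k c ≤ dI + 1 := fun c hc =>
    (sStar1_le_sStar0 hndvd hc).trans (hs0R c hc)
  have hπs0 : ∀ i, 1 ≤ i → i ≤ k → πs i ≠ 0 := fun i hi hik =>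
    hπs.1.ne_zero_of_eq_zero (sStar0_zero R k) hi hik
  have hπk0 : ∀ i, 1 ≤ i → i < k → πk i ≠ 0 := fun i hi hik =>
    hπk.1.ne_zero_of_ne (sStar1_zero R k).le (by omega) le_rfl hπkk hi hik.le hik.ne
  have hw : ∀ i, 1 ≤ i → i ≤ k → weight dI dC βI βC πk i ≤ weight dI dC βI βC πs i := by
    intro i hi hik
    rcases hik.lt_or_eq with hik | rfl
    · exact weight_le_weight_of_relLoc_le hβ hβC.le (hπk0 i hi hik) (hπs0 i hi hik.le)
        (hπk.relLoc_le_relLoc hπs (fun c hc => sStar1_le_sStar0 hndvd hc) hi hik.le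
          (fun j hj hji => hπk0 j hj (hji.trans_lt hik)) (hπs0 i hi hik.le))
        (hπk.1.relLoc_le hs1R hi hik.le (hπk0 i hi hik))
    · exact weight_le_weight_of_eq_zero hβ hβC.le hπkk (hπs0 i hi le_rfl)
        (hπs.1.relLoc_le hs0R hi le_rfl (hπs0 i hi le_rfl))
  exact ⟨hw, MC_mono α hw⟩

/-- if `R ∤ k` then `w_i(π*(s*)) ≥ w_i(π^(k))` for all `i`, hence
`MC(π^(k)) ≤ MC(π*(s*))`: adding a separate node does not increase the capacity. -/
theorem stmt18 (L R k dI dC : ℕ) (βI βC α : ℝ)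
    (hL : 1 ≤ L) (hR : 2 ≤ R) (hk : 2 ≤ k)
    (hdI : dI = R - 1) (hdC : 1 ≤ dC) (hkd : k ≤ dI + dC)
    (hβ : βC ≤ βI) (hβC : 0 < βC) (hα : 0 < α)
    (hkLR : k ≤ L * R) (hndvd : ¬ R ∣ k)
    (πs : ℕ → ℕ) (hπs : IsVerticalOrder L k (sStar0 R k) πs)
    (πk : ℕ → ℕ) (hπk : IsPiJ L R k k πk) :
    (∀ i, 1 ≤ i → i ≤ k →
      weight dI dC βI βC πk i ≤ weight dI dC βI βC πs i) ∧
    MC k dI dC βI βC α πk ≤ MC k dI dC βI βC α πs :=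
  stmt18_general L R k dI dC βI βC α hR hdI hβ hβC hndvd πs hπs πk hπk
end

section
/- Assume k ≤ LR, k ≥ R, and that R does not divide k; set q = ⌊k/R⌋ and r = k mod R (so 1 ≤ r ≤ R − 1). Then: (i) w_i(π*(s*)) = w_i(π^(k)) for every 1 ≤ i ≤ (q+1)r − 1; (ii) w_{(q+1)r}(π*(s*)) − w_{(q+1)r}(π^(k)) = β_I − β_C; and (iii) w_k(π*(s*)) = w_k(π^(k)) = (d_C + R − k)·β_C. -/
/-!
In a vertical order the cluster positions are filled layer by layer, so for a cluster position
`i` we have `relLoc π i ≤ ℓ ↔ i ≤ ∑_c min (s c) ℓ`, the number of positions in the first `ℓ`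
layers. For `s*` this count is `q * min R ℓ + min r ℓ`; for `π^(k)`, whose cluster positions are
`1, …, k - 1`, it is `q * min R ℓ + min (r - 1) ℓ`. The two counts are on the same side of every
`i < (q + 1) r`, so relative locations, hence weights, agree there. At `i = (q + 1) r` the
relative locations are `r` and `r + 1`, which trades one `β_I` for one `β_C`. Finally position `k`
is the top of a full cluster in `π*(s*)` and the separate node of `π^(k)`.
-/

open Finset

lemma Nat.sub_one_div_and_mod {R k : ℕ} (hR : 0 < R) (hk : 0 < k % R) :
    (k - 1) / R = k / R ∧ (k - 1) % R = k % R - 1 := by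
  have := Nat.div_add_mod k R
  exact (Nat.div_mod_unique hR).2 ⟨by omega, by have := Nat.mod_lt k hR; omega⟩

lemma relLoc_of_eq {π : ℕ → ℕ} {c j : ℕ} (h : π j = c) :
    relLoc π j = #{i ∈ Icc 1 j | π i = c} := by
  rw [relLoc, h]

lemma card_filter_relLoc_le (π : ℕ → ℕ) (c ℓ k : ℕ) :
    #{j ∈ Icc 1 k | π j = c ∧ relLoc π j ≤ ℓ} = min #{j ∈ Icc 1 k | π j = c} ℓ := by
  induction k with
  | zero => simp
  | succ k ih =>
    have hnew (p : ℕ → Prop) [DecidablePred p] : k + 1 ∉ {j ∈ Icc 1 k | p j} := by simp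
    rw [← insert_Icc_right_eq_Icc_add_one (by omega), filter_insert, filter_insert]
    by_cases hk : π (k + 1) = c
    · have hrel : relLoc π (k + 1) = #{j ∈ Icc 1 k | π j = c} + 1 := by
        rw [relLoc_of_eq hk, ← insert_Icc_right_eq_Icc_add_one (by omega), filter_insert,
          if_pos hk, card_insert_of_notMem (hnew _)]
      rw [if_pos hk, card_insert_of_notMem (hnew _)]
      by_cases hl : relLoc π (k + 1) ≤ ℓ
      · rw [if_pos ⟨hk, hl⟩, card_insert_of_notMem (hnew _), ih]
        omega
      · rw [if_neg (fun h => hl h.2), ih]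
        omega
    · rw [if_neg (fun h => hk h.1), if_neg hk, ih]

lemma le_iff_le_card_filter_of_monotoneOn {f : ℕ → ℕ} {m i : ℕ}
    (hf : MonotoneOn f (Set.Icc 1 m)) (hi : i ∈ Icc 1 m) (ℓ : ℕ) :
    f i ≤ ℓ ↔ i ≤ #{j ∈ Icc 1 m | f j ≤ ℓ} := by
  rw [mem_Icc] at hi
  constructor
  · intro hfi
    calc i = #(Icc 1 i) := by simp
      _ ≤ #{j ∈ Icc 1 m | f j ≤ ℓ} := card_le_card fun j hj => by
        rw [mem_Icc] at hj
        exact mem_filter.2 ⟨mem_Icc.2 ⟨hj.1, hj.2.trans hi.2⟩,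
          (hf ⟨hj.1, hj.2.trans hi.2⟩ ⟨hi.1, hi.2⟩ hj.2).trans hfi⟩
  · intro hle
    by_contra! hfi
    have : #{j ∈ Icc 1 m | f j ≤ ℓ} ≤ #(Icc 1 (i - 1)) := card_le_card fun j hj => by
      obtain ⟨hj, hfj⟩ := mem_filter.1 hj
      rw [mem_Icc] at hj ⊢
      by_contra! hji
      exact (hfi.trans_le (hf ⟨hi.1, hi.2⟩ hj (by omega))).not_ge hfj
    simp at this
    omega

lemma relLoc_le_iff_of_isVerticalOrder {L k m : ℕ} {s π : ℕ → ℕ} (hπ : IsVerticalOrder L k s π)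
    (hm : m ≤ k) (hcl : ∀ j ∈ Icc 1 k, π j ≠ 0 ↔ j ≤ m) {i : ℕ} (hi : i ∈ Icc 1 m) (ℓ : ℕ) :
    relLoc π i ≤ ℓ ↔ i ≤ ∑ c ∈ Icc 1 L, min (s c) ℓ := by
  have hne : ∀ j ∈ Set.Icc 1 m, π j ≠ 0 := fun j hj =>
    (hcl j (mem_Icc.2 ⟨hj.1, hj.2.trans hm⟩)).2 hj.2
  have hmono : MonotoneOn (relLoc π) (Set.Icc 1 m) := by
    intro a ha b hb hab
    rcases hab.eq_or_lt with rfl | hlt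
    · exact le_rfl
    · exact (hπ.2 a b ha.1 hlt (hb.2.trans hm) (hne a ha) (hne b hb)).1
  have hcard : #{j ∈ Icc 1 m | relLoc π j ≤ ℓ} = #{j ∈ Icc 1 k | π j ≠ 0 ∧ relLoc π j ≤ ℓ} := by
    congr 1
    ext j
    simp only [mem_filter, mem_Icc]
    constructor
    · rintro ⟨hj, hℓ⟩
      exact ⟨⟨hj.1, hj.2.trans hm⟩, hne j hj, hℓ⟩
    · rintro ⟨hj, h0, hℓ⟩
      exact ⟨⟨hj.1, (hcl j (mem_Icc.2 hj)).1 h0⟩, hℓ⟩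
  have hmaps : Set.MapsTo π ↑({j ∈ Icc 1 k | π j ≠ 0 ∧ relLoc π j ≤ ℓ} : Finset ℕ) ↑(Icc 1 L) := by
    intro j hj
    obtain ⟨hj, h0, -⟩ := mem_filter.1 (mem_coe.1 hj)
    exact mem_Icc.2 ⟨Nat.one_le_iff_ne_zero.2 h0, hπ.1.1 j (mem_Icc.1 hj).1 (mem_Icc.1 hj).2⟩
  rw [le_iff_le_card_filter_of_monotoneOn hmono hi, hcard, card_eq_sum_card_fiberwise hmaps]
  refine iff_of_eq (congrArg _ (sum_congr rfl fun c hc => ?_))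
  have hc0 : c ≠ 0 := by have := (mem_Icc.1 hc).1; omega
  rw [filter_filter, ← hπ.1.2 c (mem_Icc.1 hc).2, ← card_filter_relLoc_le]
  congr 1
  exact filter_congr fun j _ => by
    constructor
    · rintro ⟨⟨-, hℓ⟩, rfl⟩
      exact ⟨rfl, hℓ⟩
    · rintro ⟨rfl, hℓ⟩
      exact ⟨⟨hc0, hℓ⟩, rfl⟩

/-- The number of positions of relative location at most `ℓ` in the vertical order of the
distribution with `q` clusters of size `R` and one of size `r`. -/
def verticalCount (q R r ℓ : ℕ) : ℕ := q * min R ℓ + min r ℓ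

lemma sum_min_sStar0 {R n L : ℕ} (hL : n / R + 1 ≤ L) (ℓ : ℕ) :
    ∑ c ∈ Icc 1 L, min (sStar0 R n c) ℓ = verticalCount (n / R) R (n % R) ℓ := by
  have hfull : ∀ c ∈ Ioc 0 (n / R), min (sStar0 R n c) ℓ = min R ℓ := fun c hc => by
    simp [sStar0, (mem_Ioc.1 hc).1.ne', (mem_Ioc.1 hc).2]
  have hlast : sStar0 R n (n / R + 1) = n % R := by
    simp [sStar0, Nat.mod_eq_sub_mul_div, mul_comm]
  have htail : ∀ c ∈ Ioc (n / R + 1) L, min (sStar0 R n c) ℓ = 0 := fun c hc => by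
    have := (mem_Ioc.1 hc).1
    simp only [sStar0]
    split_ifs <;> omega
  rw [← zero_add 1, Icc_add_one_left_eq_Ioc, ← sum_Ioc_consecutive _ (Nat.zero_le _) hL,
    ← sum_Ioc_consecutive _ (Nat.zero_le _) (Nat.le_succ (n / R)), Nat.Ioc_succ_singleton,
    sum_singleton, hlast, sum_congr rfl hfull, sum_eq_zero htail]
  simp [verticalCount]

lemma ne_zero_of_sStar0 {L R k : ℕ} {π : ℕ → ℕ} (hπ : IsVerticalOrder L k (sStar0 R k) π)
    {j : ℕ} (hj : j ∈ Icc 1 k) : π j ≠ 0 := fun h0 =>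
  notMem_empty j (card_eq_zero.1 (hπ.1.2 0 (Nat.zero_le L)) ▸ mem_filter.2 ⟨hj, h0⟩)

lemma ne_zero_iff_of_isPiJ {L R k : ℕ} {π : ℕ → ℕ} (hπ : IsPiJ L R k k π) {j : ℕ}
    (hj : j ∈ Icc 1 k) : π j ≠ 0 ↔ j ≤ k - 1 := by
  have hsep : #{j ∈ Icc 1 k | π j = 0} ≤ 1 := (hπ.2.1.2 0 (Nat.zero_le L)).le
  have hj := mem_Icc.1 hj
  constructor
  · intro h0
    have : j ≠ k := fun hjk => h0 (hjk ▸ hπ.1)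
    omega
  · intro hjk h0
    have := card_le_one.1 hsep j (mem_filter.2 ⟨mem_Icc.2 hj, h0⟩) k
      (mem_filter.2 ⟨mem_Icc.2 ⟨by omega, le_rfl⟩, hπ.1⟩)
    omega

lemma ne_zero_of_isPiJ {L R k : ℕ} {π : ℕ → ℕ} (hπ : IsPiJ L R k k π) {j : ℕ}
    (hj : j ∈ Icc 1 (k - 1)) : π j ≠ 0 :=
  (ne_zero_iff_of_isPiJ hπ (Icc_subset_Icc_right (Nat.sub_le k 1) hj)).2 (mem_Icc.1 hj).2

lemma relLoc_le_iff_of_sStar0 {L R k : ℕ} {π : ℕ → ℕ} (hπ : IsVerticalOrder L k (sStar0 R k) π)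
    (hL : k / R + 1 ≤ L) {i : ℕ} (hi : i ∈ Icc 1 k) (ℓ : ℕ) :
    relLoc π i ≤ ℓ ↔ i ≤ verticalCount (k / R) R (k % R) ℓ := by
  rw [← sum_min_sStar0 hL]
  exact relLoc_le_iff_of_isVerticalOrder hπ le_rfl
    (fun j hj => iff_of_true (ne_zero_of_sStar0 hπ hj) (mem_Icc.1 hj).2) hi ℓ

lemma relLoc_le_iff_of_isPiJ {L R k : ℕ} {π : ℕ → ℕ} (hπ : IsPiJ L R k k π)
    (hL : (k - 1) / R + 1 ≤ L) {i : ℕ} (hi : i ∈ Icc 1 (k - 1)) (ℓ : ℕ) :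
    relLoc π i ≤ ℓ ↔ i ≤ verticalCount ((k - 1) / R) R ((k - 1) % R) ℓ := by
  have hs : ∀ c ∈ Icc 1 L, min (sStar1 R k c) ℓ = min (sStar0 R (k - 1) c) ℓ := fun c hc => by
    simp [sStar1, sStar0, Nat.one_le_iff_ne_zero.1 (mem_Icc.1 hc).1]
  rw [← sum_min_sStar0 hL, ← sum_congr rfl hs]
  exact relLoc_le_iff_of_isVerticalOrder hπ.2 (Nat.sub_le k 1)
    (fun j hj => ne_zero_iff_of_isPiJ hπ hj) hi ℓ

lemma eq_of_forall_le_iff_of_mem_Ioc {x i ℓ : ℕ} {g : ℕ → ℕ} (h : ∀ ℓ', x ≤ ℓ' ↔ i ≤ g ℓ')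
    (hℓ : 0 < ℓ) (hi : i ∈ Set.Ioc (g (ℓ - 1)) (g ℓ)) : x = ℓ := by
  have := (h ℓ).2 hi.2
  have := (h (ℓ - 1)).not.2 hi.1.not_ge
  omega

section
variable {q R r : ℕ}

lemma le_verticalCount_iff_of_lt_mul {i : ℕ} (hrR : r ≤ R) (hi : i < (q + 1) * r) (ℓ : ℕ) :
    i ≤ verticalCount q R r ℓ ↔ i ≤ verticalCount q R (r - 1) ℓ := by
  unfold verticalCount
  rcases lt_or_ge ℓ r with hℓ | hℓ
  · rw [min_eq_right hℓ.le, min_eq_right (by omega : ℓ ≤ r - 1)]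
  · have : q * r ≤ q * min R ℓ := Nat.mul_le_mul_left q (le_min hrR hℓ)
    rw [add_one_mul] at hi
    omega

lemma mul_mem_Ioc_verticalCount (hr : 0 < r) (hrR : r ≤ R) :
    (q + 1) * r ∈ Set.Ioc (verticalCount q R r (r - 1)) (verticalCount q R r r) := by
  have : q * (r - 1) ≤ q * r := Nat.mul_le_mul_left q (Nat.sub_le r 1)
  rw [verticalCount, verticalCount, Set.mem_Ioc, min_eq_right hrR,
    min_eq_right (by omega : r - 1 ≤ R), min_self, min_eq_right (Nat.sub_le r 1), add_one_mul]
  constructor <;> omega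

lemma mul_mem_Ioc_verticalCount_sub_one (hq : 0 < q) (hr : 0 < r) (hrR : r < R) :
    (q + 1) * r ∈ Set.Ioc (verticalCount q R (r - 1) r) (verticalCount q R (r - 1) (r + 1)) := by
  rw [verticalCount, verticalCount, Set.mem_Ioc, min_eq_right hrR.le,
    min_eq_right (by omega : r + 1 ≤ R), min_eq_left (Nat.sub_le r 1),
    min_eq_left (by omega : r - 1 ≤ r + 1), mul_add_one, add_one_mul]
  constructor <;> omega

lemma mul_add_mem_Ioc_verticalCount (hq : 0 < q) (hrR : r < R) :
    R * q + r ∈ Set.Ioc (verticalCount q R r (R - 1)) (verticalCount q R r R) := by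
  rw [verticalCount, verticalCount, Set.mem_Ioc, min_self, min_eq_left hrR.le,
    min_eq_left (by omega : r ≤ R - 1), min_eq_right (Nat.sub_le R 1), Nat.mul_sub_one,
    mul_comm R q]
  have : q ≤ q * R := Nat.le_mul_of_pos_right q (by omega)
  constructor <;> omega

end

section
variable {dI dC : ℕ} {βI βC : ℝ} {π π' : ℕ → ℕ} {i : ℕ}

lemma weight_of_ne_zero (h : π i ≠ 0) :
    weight dI dC βI βC π i =
      ((dI + 1 - relLoc π i : ℕ) : ℝ) * βI + ((dC - (i - relLoc π i) : ℕ) : ℝ) * βC := by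
  rw [weight, if_neg h, aCoef, bCoef]

lemma weight_eq_of_relLoc_eq (hπ : π i ≠ 0) (hπ' : π' i ≠ 0) (h : relLoc π i = relLoc π' i) :
    weight dI dC βI βC π i = weight dI dC βI βC π' i := by
  rw [weight_of_ne_zero hπ, weight_of_ne_zero hπ', h]

lemma weight_sub_weight_of_relLoc_eq_succ (hπ : π i ≠ 0) (hπ' : π' i ≠ 0)
    (h : relLoc π' i = relLoc π i + 1) (hI : relLoc π i ≤ dI) (hC : i - relLoc π i ≤ dC)
    (hi : relLoc π i < i) :
    weight dI dC βI βC π i - weight dI dC βI βC π' i = βI - βC := by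
  have ha : dI + 1 - relLoc π i = dI + 1 - relLoc π' i + 1 := by omega
  have hb : dC - (i - relLoc π' i) = dC - (i - relLoc π i) + 1 := by omega
  rw [weight_of_ne_zero hπ, weight_of_ne_zero hπ', ha, hb]
  push_cast
  ring

lemma weight_of_relLoc_eq_succ (hπ : π i ≠ 0) (h : relLoc π i = dI + 1) :
    weight dI dC βI βC π i = ((dC - (i - (dI + 1)) : ℕ) : ℝ) * βC := by
  rw [weight_of_ne_zero hπ, h, Nat.sub_self, Nat.cast_zero, zero_mul, zero_add]

end

theorem stmt19_general (L R k dI dC : ℕ) (βI βC : ℝ)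
    (hdI : dI = R - 1) (hkd : k ≤ dI + dC)
    (hkLR : k ≤ L * R) (hRk : R ≤ k) (hndvd : ¬ R ∣ k)
    (q r : ℕ) (hq : q = k / R) (hr : r = k % R)
    (πs : ℕ → ℕ) (hπs : IsVerticalOrder L k (sStar0 R k) πs)
    (πk : ℕ → ℕ) (hπk : IsPiJ L R k k πk) :
    (∀ i, 1 ≤ i → i ≤ (q + 1) * r - 1 →
      weight dI dC βI βC πs i = weight dI dC βI βC πk i) ∧
    weight dI dC βI βC πs ((q + 1) * r) - weight dI dC βI βC πk ((q + 1) * r) = βI - βC ∧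
    (weight dI dC βI βC πs k = ((dC + R - k : ℕ) : ℝ) * βC ∧
      weight dI dC βI βC πk k = ((dC + R - k : ℕ) : ℝ) * βC) := by
  have hR : 0 < R := Nat.pos_of_ne_zero fun h => hndvd (by simp_all)
  have hkqr : R * q + r = k := by rw [hq, hr, Nat.div_add_mod]
  have hr0 : 0 < r := Nat.pos_of_ne_zero fun h => hndvd (Nat.dvd_of_mod_eq_zero (hr ▸ h))
  have hrR : r < R := hr ▸ Nat.mod_lt k hR
  have hq0 : 0 < q := hq ▸ Nat.div_pos hRk hR
  have hqL : q + 1 ≤ L := by by_contra! h; nlinarith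
  have hmk : (q + 1) * r + R ≤ k + r := by
    obtain ⟨p, rfl⟩ : ∃ p, q = p + 1 := ⟨q - 1, by omega⟩
    nlinarith [Nat.mul_le_mul_left p hrR.le]
  have hrm : r < (q + 1) * r := by nlinarith
  obtain ⟨hq', hr'⟩ := hq ▸ hr ▸ Nat.sub_one_div_and_mod hR (hr ▸ hr0)
  have hIs := fun i (hi : i ∈ Icc 1 k) => hq ▸ hr ▸ relLoc_le_iff_of_sStar0 hπs (hq ▸ hqL) hi
  have hIk := fun i (hi : i ∈ Icc 1 (k - 1)) =>
    hq' ▸ hr' ▸ relLoc_le_iff_of_isPiJ hπk (hq' ▸ hqL) hi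
  have hsub : Icc 1 (k - 1) ⊆ Icc 1 k := Icc_subset_Icc_right (Nat.sub_le k 1)
  refine ⟨fun i hi1 hi2 => ?_, ?_, ?_, ?_⟩
  · have hi : i ∈ Icc 1 (k - 1) := mem_Icc.2 ⟨hi1, by omega⟩
    refine weight_eq_of_relLoc_eq (ne_zero_of_sStar0 hπs (hsub hi)) (ne_zero_of_isPiJ hπk hi)
      (eq_of_forall_ge_iff fun ℓ => ?_)
    rw [hIs i (hsub hi), hIk i hi, le_verticalCount_iff_of_lt_mul hrR.le (by omega)]
  · have hm : (q + 1) * r ∈ Icc 1 (k - 1) := mem_Icc.2 ⟨by omega, by omega⟩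
    have hsm : relLoc πs ((q + 1) * r) = r := eq_of_forall_le_iff_of_mem_Ioc (hIs _ (hsub hm))
      hr0 (mul_mem_Ioc_verticalCount hr0 hrR.le)
    have hkm : relLoc πk ((q + 1) * r) = r + 1 := eq_of_forall_le_iff_of_mem_Ioc (hIk _ hm)
      r.succ_pos (by simpa using mul_mem_Ioc_verticalCount_sub_one hq0 hr0 hrR)
    exact weight_sub_weight_of_relLoc_eq_succ (ne_zero_of_sStar0 hπs (hsub hm))
      (ne_zero_of_isPiJ hπk hm) (by rw [hsm, hkm]) (by omega) (by omega) (by omega)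
  · have hk : k ∈ Icc 1 k := mem_Icc.2 ⟨by omega, le_rfl⟩
    have hsk : relLoc πs k = R := eq_of_forall_le_iff_of_mem_Ioc (hIs k hk) hR
      (hkqr ▸ mul_add_mem_Ioc_verticalCount hq0 hrR)
    rw [weight_of_relLoc_eq_succ (ne_zero_of_sStar0 hπs hk) (by omega),
      show dC - (k - (dI + 1)) = dC + R - k by omega]
  · rw [weight, if_pos hπk.1, show dI + dC + 1 - k = dC + R - k by omega]

/-- when `R ≤ k ≤ LR` and `R ∤ k`, with `q = ⌊k/R⌋`, `r = k mod R`: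
(i) `w_i(π*(s*)) = w_i(π^(k))` for `1 ≤ i ≤ (q+1)r − 1`;
(ii) `w_{(q+1)r}(π*(s*)) − w_{(q+1)r}(π^(k)) = β_I − β_C`;
(iii) `w_k(π*(s*)) = w_k(π^(k)) = (d_C + R − k)·β_C`. -/
theorem stmt19 (L R k dI dC : ℕ) (βI βC : ℝ)
    (hL : 1 ≤ L) (hR : 2 ≤ R) (hk : 2 ≤ k)
    (hdI : dI = R - 1) (hdC : 1 ≤ dC) (hkd : k ≤ dI + dC)
    (hβ : βC ≤ βI) (hβC : 0 < βC)
    (hkLR : k ≤ L * R) (hRk : R ≤ k) (hndvd : ¬ R ∣ k)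
    (q r : ℕ) (hq : q = k / R) (hr : r = k % R)
    (πs : ℕ → ℕ) (hπs : IsVerticalOrder L k (sStar0 R k) πs)
    (πk : ℕ → ℕ) (hπk : IsPiJ L R k k πk) :
    (∀ i, 1 ≤ i → i ≤ (q + 1) * r - 1 →
      weight dI dC βI βC πs i = weight dI dC βI βC πk i) ∧
    weight dI dC βI βC πs ((q + 1) * r) - weight dI dC βI βC πk ((q + 1) * r) = βI - βC ∧
    (weight dI dC βI βC πs k = ((dC + R - k : ℕ) : ℝ) * βC ∧
      weight dI dC βI βC πk k = ((dC + R - k : ℕ) : ℝ) * βC) :=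
  stmt19_general L R k dI dC βI βC hdI hkd hkLR hRk hndvd q r hq hr πs hπs πk hπk
end
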